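/- There exists ε₀ > 0 such that for every ε ∈ (0, ε₀] and every r ∈ [0, ε), with f_ε(r) = arctan(r/ε²) + (arctan ε)·r/ε: ∫_{s=0}^{1} ds / ( (1−s)·cos(f_ε(r))/f_ε'(r) + s·(ε − r·sin f_ε(r)) ) ≤ (2/(ε − r))·|ln ε|. -/
import Mathlib


open MeasureTheory Filter Topology Real

/-- The zenith-angle function `f_ε(r) = arctan(r/ε²) + (arctan ε)·r/ε`. -/
noncomputable def fe (ε r : ℝ) : ℝ := Real.arctan (r / ε ^ 2) + Real.arctan ε * r / ε

/-- Its derivative `f_ε'(r) = ε²/(ε⁴ + r²) + (arctan ε)/ε`. -/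
noncomputable def fder (ε r : ℝ) : ℝ := ε ^ 2 / (ε ^ 4 + r ^ 2) + Real.arctan ε / ε

set_option maxHeartbeats 800000

lemma arctan_pos' {x : ℝ} (hx : 0 < x) : 0 < Real.arctan x := by
  have := Real.arctan_strictMono hx
  simpa [Real.arctan_zero] using this

lemma arctan_le_self' {x : ℝ} (hx : 0 ≤ x) : Real.arctan x ≤ x := by
  rcases eq_or_lt_of_le hx with h | h
  · simp [← h, Real.arctan_zero]
  · have := Real.lt_tan (arctan_pos' h) (Real.arctan_lt_pi_div_two x)
    rw [Real.tan_arctan] at this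
    exact this.le

lemma arctan_nonneg' {x : ℝ} (hx : 0 ≤ x) : 0 ≤ Real.arctan x := by
  rcases eq_or_lt_of_le hx with h | h
  · simp [← h, Real.arctan_zero]
  · exact (arctan_pos' h).le

lemma fder_pos {ε r : ℝ} (hε : 0 < ε) : 0 < fder ε r := by
  have h1 : 0 < Real.arctan ε := arctan_pos' hε
  have h2 : 0 < ε ^ 2 / (ε ^ 4 + r ^ 2) := by positivity
  have h3 : 0 < Real.arctan ε / ε := by positivity
  unfold fder; linarith

lemma cos_fe_lower {ε r : ℝ} (hε : 0 < ε) (hε16 : ε ≤ 1/16) (hr0 : 0 ≤ r) (hrε : r < ε) :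
    ε * (ε - r) / 2 * fder ε r ≤ Real.cos (fe ε r) := by
  have hα0 : 0 < Real.arctan ε := arctan_pos' hε
  have hαε : Real.arctan ε ≤ ε := arctan_le_self' hε.le
  set a := Real.arctan (r / ε ^ 2) with ha
  set b := Real.arctan ε with hb
  have hfe_le : fe ε r ≤ a + b := by
    unfold fe
    have : Real.arctan ε * r / ε ≤ b := by
      rw [div_le_iff₀ hε]
      nlinarith
    linarith
  have hfe_nonneg : 0 ≤ fe ε r := by
    unfold fe
    have h1 : 0 ≤ Real.arctan (r / ε ^ 2) := arctan_nonneg' (by positivity)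
    have h2 : 0 ≤ Real.arctan ε * r / ε := by positivity
    linarith
  have hab_pi : a + b ≤ π := by
    have h1 := Real.arctan_lt_pi_div_two (r / ε ^ 2)
    have h2 := Real.arctan_lt_pi_div_two ε
    rw [← ha] at h1; rw [← hb] at h2
    linarith
  have hcos : Real.cos (a + b) ≤ Real.cos (fe ε r) :=
    Real.cos_le_cos_of_nonneg_of_le_pi hfe_nonneg hab_pi hfe_le
  set S : ℝ := Real.sqrt (1 + (r / ε ^ 2) ^ 2) with hS
  set T : ℝ := Real.sqrt (1 + ε ^ 2) with hT
  have hS2 : S ^ 2 = 1 + (r / ε ^ 2) ^ 2 := Real.sq_sqrt (by positivity)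
  have hT2 : T ^ 2 = 1 + ε ^ 2 := Real.sq_sqrt (by positivity)
  have hS1 : 1 ≤ S := by rw [hS, Real.one_le_sqrt]; nlinarith [sq_nonneg (r / ε ^ 2)]
  have hT1 : 1 ≤ T := by rw [hT, Real.one_le_sqrt]; nlinarith
  have hS0 : 0 < S := lt_of_lt_of_le one_pos hS1
  have hT0 : 0 < T := lt_of_lt_of_le one_pos hT1
  have hcosab : Real.cos (a + b) = (ε - r) / (ε * S * T) := by
    rw [Real.cos_add, ha, hb, Real.cos_arctan, Real.sin_arctan, Real.cos_arctan,
      Real.sin_arctan, ← hS, ← hT]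
    field_simp
  rw [hcosab] at hcos
  refine le_trans ?_ hcos
  have hE : ε ^ 4 + r ^ 2 = ε ^ 4 * S ^ 2 := by
    rw [hS2]; field_simp
  have hrS : r ≤ ε ^ 2 * S := by
    have h2 : r / ε ^ 2 ≤ S := by
      nlinarith [div_nonneg hr0 (by positivity : (0:ℝ) ≤ ε ^ 2), hS2,
        sq_nonneg (S - r / ε ^ 2)]
    have h3 := mul_le_mul_of_nonneg_right h2 (le_of_lt (show (0:ℝ) < ε ^ 2 by positivity))
    rw [div_mul_cancel₀ _ (show (ε:ℝ) ^ 2 ≠ 0 by positivity)] at h3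
    linarith
  have hT3 : T ≤ 21/20 := by nlinarith
  have key : T + Real.arctan ε * ε * S ^ 2 * T ≤ 2 * S := by
    have hr2 : r ^ 2 ≤ ε ^ 3 * S := by nlinarith
    have h2' : ε ^ 2 * S ^ 2 ≤ ε ^ 2 + ε * S := by
      have h4 : ε ^ 4 * S ^ 2 ≤ ε ^ 4 + ε ^ 3 * S := by nlinarith
      nlinarith [h4, mul_pos hε hε]
    have h1 : Real.arctan ε * ε * S ^ 2 * T ≤ ε ^ 2 * S ^ 2 * T := by
      have := mul_le_mul_of_nonneg_right hαε (show (0:ℝ) ≤ ε * S ^ 2 * T by positivity)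
      nlinarith [this]
    have h2 : ε ^ 2 * S ^ 2 * T ≤ (ε ^ 2 + ε * S) * T := by nlinarith
    have hεT : ε * T ≤ 21/320 := by nlinarith
    have hεST : ε * S * T ≤ (21/320) * S := by nlinarith
    have hε2T : ε ^ 2 * T ≤ (1/256) * (21/20) := by nlinarith
    nlinarith
  have hfd : fder ε r ≤ 2 / (ε ^ 2 * S * T) := by
    have hfe2 : fder ε r = (ε * ε ^ 2 + Real.arctan ε * (ε ^ 4 * S ^ 2)) / (ε ^ 4 * S ^ 2 * ε) := by
      unfold fder; rw [hE]; field_simp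
    rw [hfe2, div_le_div_iff₀ (by positivity) (by positivity)]
    have h := mul_le_mul_of_nonneg_left key (show (0:ℝ) ≤ ε ^ 5 * S by positivity)
    nlinarith [h]
  have hfp : 0 < fder ε r := fder_pos hε
  calc ε * (ε - r) / 2 * fder ε r ≤ ε * (ε - r) / 2 * (2 / (ε ^ 2 * S * T)) := by
        apply mul_le_mul_of_nonneg_left hfd (by nlinarith)
  _ = (ε - r) / (ε * S * T) := by field_simp


/-- there exists `ε₀ > 0` such that for every `ε ∈ (0, ε₀]` and
every `r ∈ [0, ε)`,
`∫₀¹ ds/((1−s)·cos(f_ε(r))/f_ε'(r) + s·(ε − r·sin f_ε(r))) ≤ (2/(ε − r))·|ln ε|`. -/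
theorem integral_log_nabla_varphi :
    ∃ ε₀ > (0 : ℝ), ∀ ε ∈ Set.Ioc (0 : ℝ) ε₀, ∀ r ∈ Set.Ico (0 : ℝ) ε,
      ∫ s in Set.Ioo (0 : ℝ) 1,
          ((1 - s) * Real.cos (fe ε r) / fder ε r
            + s * (ε - r * Real.sin (fe ε r)))⁻¹
        ≤ 2 / (ε - r) * |Real.log ε| := by
  refine ⟨1/16, by norm_num, ?_⟩
  rintro ε ⟨hε0, hε16⟩ r ⟨hr0, hrε⟩
  have hε1 : ε < 1 := lt_of_le_of_lt hε16 (by norm_num)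
  have hfp : 0 < fder ε r := fder_pos hε0
  simp only [mul_div_assoc]
  set A : ℝ := Real.cos (fe ε r) / fder ε r with hA
  set B : ℝ := ε - r * Real.sin (fe ε r) with hB
  set A₀ : ℝ := ε * (ε - r) / 2 with hA₀
  set B₀ : ℝ := ε - r with hB₀
  have hA0 : A₀ ≤ A := by
    rw [hA, le_div_iff₀ hfp]
    exact cos_fe_lower hε0 hε16 hr0 hrε
  have hA₀pos : 0 < A₀ := by rw [hA₀]; nlinarith
  have hApos : 0 < A := lt_of_lt_of_le hA₀pos hA0
  have hB₀pos : 0 < B₀ := by rw [hB₀]; linarith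
  have hBge : B₀ ≤ B := by
    have := Real.sin_le_one (fe ε r)
    rw [hB₀, hB]; nlinarith
  have hBpos : 0 < B := lt_of_lt_of_le hB₀pos hBge
  set g : ℝ → ℝ := fun s => ((1 - s) * A + s * B)⁻¹ with hg
  -- integrability of g
  have hDpos : ∀ s ∈ Set.Icc (0:ℝ) 1, 0 < (1 - s) * A + s * B := by
    rintro s ⟨h1, h2⟩
    rcases le_or_gt s (1/2) with h | h
    · nlinarith
    · nlinarith
  have hg_cont : ContinuousOn g (Set.Icc 0 1) := by
    apply ContinuousOn.inv₀
    · fun_prop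
    · intro s hs; exact (hDpos s hs).ne'
  have hg_int : IntegrableOn g (Set.Icc 0 1) volume := hg_cont.integrableOn_Icc
  have hint1 : IntegrableOn g (Set.Ioc 0 ε) volume :=
    hg_int.mono_set (Set.Ioc_subset_Icc_self.trans (Set.Icc_subset_Icc le_rfl hε1.le))
  have hint2 : IntegrableOn g (Set.Ioo ε 1) volume :=
    hg_int.mono_set (Set.Ioo_subset_Icc_self.trans (Set.Icc_subset_Icc hε0.le le_rfl))
  have hdisj : Disjoint (Set.Ioc (0:ℝ) ε) (Set.Ioo ε 1) :=
    Set.disjoint_left.mpr fun x hx1 hx2 => absurd hx1.2 (not_le.mpr hx2.1)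
  have hsplit : ∫ s in Set.Ioo (0:ℝ) 1, g s
      = (∫ s in Set.Ioc (0:ℝ) ε, g s) + ∫ s in Set.Ioo ε 1, g s := by
    rw [← Set.Ioc_union_Ioo_eq_Ioo hε0.le hε1]
    exact setIntegral_union hdisj measurableSet_Ioo hint1 hint2
  -- dominating functions
  set g1 : ℝ → ℝ := fun s => A₀⁻¹ * (1 - s)⁻¹ with hg1
  set g2 : ℝ → ℝ := fun s => B₀⁻¹ * s⁻¹ with hg2
  have hg1_cont : ContinuousOn g1 (Set.Icc 0 ε) := by
    apply ContinuousOn.mul continuousOn_const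
    apply ContinuousOn.inv₀
    · fun_prop
    · rintro s ⟨hs1, hs2⟩; intro hc; nlinarith [hc]
  have hg1_int : IntegrableOn g1 (Set.Ioc 0 ε) volume :=
    hg1_cont.integrableOn_Icc.mono_set Set.Ioc_subset_Icc_self
  have hg2_cont : ContinuousOn g2 (Set.Icc ε 1) := by
    apply ContinuousOn.mul continuousOn_const
    apply ContinuousOn.inv₀
    · fun_prop
    · rintro s ⟨hs1, hs2⟩; intro hc; nlinarith [hc]
  have hg2_int : IntegrableOn g2 (Set.Ioo ε 1) volume :=
    hg2_cont.integrableOn_Icc.mono_set Set.Ioo_subset_Icc_self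
  -- pointwise bounds
  have hm1 : (∫ s in Set.Ioc (0:ℝ) ε, g s) ≤ ∫ s in Set.Ioc (0:ℝ) ε, g1 s := by
    apply setIntegral_mono_on hint1 hg1_int measurableSet_Ioc
    rintro s ⟨hs1, hs2⟩
    rw [hg, hg1]
    have hd1 : 0 < (1 - s) * A₀ := by nlinarith
    have hd2 : (1 - s) * A₀ ≤ (1 - s) * A + s * B := by nlinarith
    calc ((1 - s) * A + s * B)⁻¹ ≤ ((1 - s) * A₀)⁻¹ := by
          apply inv_anti₀ hd1 hd2
    _ = A₀⁻¹ * (1 - s)⁻¹ := by rw [mul_inv]; ring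
  have hm2 : (∫ s in Set.Ioo ε 1, g s) ≤ ∫ s in Set.Ioo ε 1, g2 s := by
    apply setIntegral_mono_on hint2 hg2_int measurableSet_Ioo
    rintro s ⟨hs1, hs2⟩
    rw [hg, hg2]
    have hd1 : 0 < s * B₀ := by nlinarith
    have hd2 : s * B₀ ≤ (1 - s) * A + s * B := by nlinarith
    calc ((1 - s) * A + s * B)⁻¹ ≤ (s * B₀)⁻¹ := by
          apply inv_anti₀ hd1 hd2
    _ = B₀⁻¹ * s⁻¹ := by rw [mul_inv]; ring
  -- values of the dominating integrals
  have hv1 : (∫ s in Set.Ioc (0:ℝ) ε, g1 s) = A₀⁻¹ * Real.log (1 / (1 - ε)) := by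
    rw [hg1]
    rw [integral_const_mul]
    congr 1
    rw [← intervalIntegral.integral_of_le hε0.le]
    have h := intervalIntegral.integral_comp_sub_left (a := (0:ℝ)) (b := ε)
      (fun x => x⁻¹) 1
    rw [h, sub_zero, integral_inv]
    · rw [Set.uIcc_of_le (by linarith)]
      rintro ⟨hc1, hc2⟩; linarith
  have hv2 : (∫ s in Set.Ioo ε 1, g2 s) = B₀⁻¹ * Real.log (1 / ε) := by
    rw [hg2]
    rw [integral_const_mul]
    congr 1
    rw [← integral_Ioc_eq_integral_Ioo, ← intervalIntegral.integral_of_le hε1.le]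
    rw [integral_inv]
    · rw [Set.uIcc_of_le hε1.le]
      rintro ⟨hc1, hc2⟩; linarith
  -- final arithmetic
  have habs : |Real.log ε| = -Real.log ε := abs_of_neg (Real.log_neg hε0 hε1)
  have hlog1 : Real.log (1 / (1 - ε)) ≤ 16 / 15 * ε := by
    have h := Real.log_le_sub_one_of_pos (show (0:ℝ) < 1 / (1 - ε) by apply div_pos one_pos; linarith)
    have h2 : 1 / (1 - ε) - 1 ≤ 16 / 15 * ε := by
      rw [div_sub_one (by linarith : (1:ℝ) - ε ≠ 0), div_le_iff₀ (by linarith)]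
      nlinarith
    linarith
  have hloge : (32:ℝ) / 15 ≤ -Real.log ε := by
    have h1 : Real.log 16 ≤ Real.log (1 / ε) := by
      apply Real.log_le_log (by norm_num)
      rw [le_div_iff₀ hε0]; linarith
    have h2 : Real.log (1 / ε) = -Real.log ε := by rw [one_div, Real.log_inv]
    have h3 : Real.log 16 = 4 * Real.log 2 := by
      rw [show (16:ℝ) = 2 ^ 4 by norm_num, Real.log_pow]; push_cast; ring
    have h4 := Real.log_two_gt_d9
    rw [h2] at h1; rw [h3] at h1; linarith
  have hx1 : A₀⁻¹ * Real.log (1 / (1 - ε)) ≤ (ε - r)⁻¹ * (-Real.log ε) := by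
    have s1 : A₀⁻¹ * Real.log (1 / (1 - ε)) ≤ A₀⁻¹ * (16 / 15 * ε) :=
      mul_le_mul_of_nonneg_left hlog1 (by positivity)
    have s2 : A₀⁻¹ * (16 / 15 * ε) = 32 / 15 * (ε - r)⁻¹ := by
      rw [hA₀]
      field_simp
      ring
    have s3 : 32 / 15 * (ε - r)⁻¹ ≤ (-Real.log ε) * (ε - r)⁻¹ :=
      mul_le_mul_of_nonneg_right hloge (by positivity)
    rw [s2] at s1; linarith [s1, s3]
  have hx2 : B₀⁻¹ * Real.log (1 / ε) = (ε - r)⁻¹ * (-Real.log ε) := by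
    rw [hB₀, one_div, Real.log_inv]
  have hfin : 2 / (ε - r) * |Real.log ε|
      = (ε - r)⁻¹ * (-Real.log ε) + (ε - r)⁻¹ * (-Real.log ε) := by
    rw [habs, div_eq_mul_inv]; ring
  rw [hfin]
  calc ∫ s in Set.Ioo (0:ℝ) 1, g s
      = (∫ s in Set.Ioc (0:ℝ) ε, g s) + ∫ s in Set.Ioo ε 1, g s := hsplit
  _ ≤ (∫ s in Set.Ioc (0:ℝ) ε, g1 s) + ∫ s in Set.Ioo ε 1, g2 s := by
      exact add_le_add hm1 hm2
  _ = A₀⁻¹ * Real.log (1 / (1 - ε)) + B₀⁻¹ * Real.log (1 / ε) := by rw [hv1, hv2]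
  _ ≤ (ε - r)⁻¹ * (-Real.log ε) + (ε - r)⁻¹ * (-Real.log ε) := by
      rw [hx2]; exact add_le_add hx1 le_rfl
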